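/- arXiv:1010.2321 — 2 statements merged into one kernel-verified Lean document; each statement's English description precedes it below -/
import Mathlib

section
/- A symplectic Dyck path for sp_{2n} starting at a simple root α_i and ending at α_j or α_{j,j̄} contains, for each fixed first index r, a (possibly empty) consecutive segment of roots α_{r,q}; consequently any symplectic Dyck path contains at most one root from any antichain of the form M^s in Lemma 3.1, i.e., the roots along a Dyck path are strictly increasing with respect to the order f_{n,n} > f_{n-1,n̄-1} > ... described in (2.8). -/
open scoped BigOperators TensorProduct

namespace SpPBW

/-- Coded positive roots of `C_n`: a pair `(i,c)` with `1 ≤ i ≤ c ≤ 2n - i`.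
For `c ≤ n` this codes the root `α_{i,c} = α_i + ⋯ + α_c`; for `c > n` it codes the
root `α_{i, (2n-c)-bar} = α_i + ⋯ + α_n + α_{n-1} + ⋯ + α_{2n-c}`. -/
def ValidPair (n : ℕ) (a : ℕ × ℕ) : Prop :=
  1 ≤ a.1 ∧ a.1 ≤ a.2 ∧ a.2 ≤ 2 * n - a.1

instance (n : ℕ) : DecidablePred (ValidPair n) := fun a =>
  decidable_of_iff (1 ≤ a.1 ∧ a.1 ≤ a.2 ∧ a.2 ≤ 2 * n - a.1) Iff.rfl

def validFinset (n : ℕ) : Finset (ℕ × ℕ) :=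
  (Finset.Icc 1 n ×ˢ Finset.Icc 1 (2 * n)).filter fun a => ValidPair n a

/-- The order (2.8) on positive roots: `rootLt a b` means `f_a < f_b`,
i.e. `f_b` is larger (rows from top to bottom, within a row from left to right). -/
def rootLt (a b : ℕ × ℕ) : Prop := a.1 < b.1 ∨ (a.1 = b.1 ∧ a.2 < b.2)

def DyckStep (a b : ℕ × ℕ) : Prop := b = (a.1, a.2 + 1) ∨ b = (a.1 + 1, a.2)

/-- A symplectic Dyck path (Definition 1.2). -/
def IsDyck (n : ℕ) (p : List (ℕ × ℕ)) : Prop :=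
  p ≠ [] ∧ (∀ a ∈ p, ValidPair n a) ∧ (∃ i, p.head? = some (i, i)) ∧
  p.Chain' DyckStep ∧ (∃ j, p.getLast? = some (j, j) ∨ p.getLast? = some (j, 2 * n - j))

/-- The bound `m_i + ⋯ + m_j` (resp. `m_i + ⋯ + m_n`) for a Dyck path starting at `α_i`
and ending at `α_j` (resp. at `α_{j,j-bar}`). -/
def pathBound (n : ℕ) (m : ℕ → ℕ) (p : List (ℕ × ℕ)) : ℕ :=
  match p.head?, p.getLast? with
  | some a, some b =>
      if b.1 = b.2 then ∑ l ∈ Finset.Icc a.1 b.2, m l else ∑ l ∈ Finset.Icc a.1 n, m l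
  | _, _ => 0

/-- `InS n m s` says that the multi-exponent `s` is a lattice point of the
polytope `P(λ)` for `λ = Σ m_i ω_i`, i.e. `s ∈ S(λ)`. -/
def InS (n : ℕ) (m : ℕ → ℕ) (s : ℕ × ℕ → ℕ) : Prop :=
  (∀ a, ¬ ValidPair n a → s a = 0) ∧
  ∀ p : List (ℕ × ℕ), IsDyck n p → (p.map s).sum ≤ pathBound n m p

/-- The coefficient vector of the fundamental weight `ω_i`. -/
def fundWt (i : ℕ) : ℕ → ℕ := fun l => if l = i then 1 else 0

/-- total degree of a multi-exponent -/
def deg (n : ℕ) (s : ℕ × ℕ → ℕ) : ℕ := ∑ a ∈ validFinset n, s a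

/-- `s_{i,•}`, the sum of the exponents in the `i`-th row -/
def rowDeg (n : ℕ) (s : ℕ × ℕ → ℕ) (i : ℕ) : ℕ :=
  ∑ a ∈ (validFinset n).filter (fun a => a.1 = i), s a

/-- `d(s) < d(t)` lexicographically, reading rows from the bottom (`i = n`) up. -/
def dLt (n : ℕ) (s t : ℕ × ℕ → ℕ) : Prop :=
  ∃ i, 1 ≤ i ∧ i ≤ n ∧ rowDeg n s i < rowDeg n t i ∧
    ∀ j, i < j → j ≤ n → rowDeg n s j = rowDeg n t j

def dEq (n : ℕ) (s t : ℕ × ℕ → ℕ) : Prop := ∀ i, rowDeg n s i = rowDeg n t i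

/-- `f^s > f^t` in the lexicographic order induced by the variable order (2.8). -/
def lexGt (n : ℕ) (s t : ℕ × ℕ → ℕ) : Prop :=
  ∃ a, ValidPair n a ∧ t a < s a ∧ ∀ b, ValidPair n b → rootLt a b → s b = t b

/-- `mOrd n s t` is the relation `f^s ◁ f^t` of Definition 2.7 (`f^s` "greater"). -/
def mOrd (n : ℕ) (s t : ℕ × ℕ → ℕ) : Prop :=
  deg n t < deg n s ∨ (deg n s = deg n t ∧ (dLt n s t ∨ (dEq n s t ∧ lexGt n s t)))

/-- multiplicity of the simple root `α_l` in the coded root `a` -/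
def coeffRoot (n : ℕ) (a : ℕ × ℕ) (l : ℕ) : ℕ :=
  (if a.1 ≤ l ∧ l ≤ a.2 ∧ l ≤ n then 1 else 0) +
  (if n < a.2 ∧ 2 * n - a.2 ≤ l ∧ l ≤ n - 1 then 1 else 0)

/-- the Cartan matrix of type `C_n` (indices `1,…,n`, `α_n` long):
`cartanC n i j = ⟨α_i, α_j^∨⟩` -/
def cartanC (n i j : ℕ) : ℤ :=
  if i = j then 2 else if i = n ∧ j + 1 = n then -2
  else if i + 1 = j ∨ j + 1 = i then -1 else 0

/-- `⟨α_a, α_i^∨⟩` for a coded positive root `a` -/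
def rootPairing (n : ℕ) (a : ℕ × ℕ) (i : ℕ) : ℤ :=
  ∑ l ∈ Finset.Icc 1 n, (coeffRoot n a l : ℤ) * cartanC n l i

/-- `R_i^s`: coded roots `β` in the support of `s` with `(ω_i, β) ≠ 0`. -/
def Ris (n i : ℕ) (s : ℕ × ℕ → ℕ) : Set (ℕ × ℕ) :=
  {a | ValidPair n a ∧ s a ≠ 0 ∧ a.1 ≤ i ∧ i ≤ a.2}

/-- the set of minimal elements of `R_i^s` with respect to the order (2.8) -/
def Mis (n i : ℕ) (s : ℕ × ℕ → ℕ) : Set (ℕ × ℕ) :=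
  {a | a ∈ Ris n i s ∧ ∀ b ∈ Ris n i s, ¬ rootLt b a}

-- the indicator multi-exponent `m_i^s` of `M_i^s`
open Classical in
noncomputable def mInd (n i : ℕ) (s : ℕ × ℕ → ℕ) : ℕ × ℕ → ℕ :=
  fun a => if a ∈ Mis n i s then 1 else 0


section Lie

variable {L V : Type*} [LieRing L] [LieAlgebra ℂ L]
variable [AddCommGroup V] [Module ℂ V] [LieRingModule L V] [LieModule ℂ L V]

/-- `applyList [x₁,…,x_l] w = x₁ ⋅ (x₂ ⋅ ( ⋯ (x_l ⋅ w)))` -/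
def applyList (xs : List L) (w : V) : V := xs.foldr (fun x u => ⁅x, u⁆) w

/-- the Chevalley–Serre relations for the Cartan matrix of type `C_n`, for
generators `h i, e i, f i`, `1 ≤ i ≤ n` -/
def SerreRels (n : ℕ) (h e f : ℕ → L) : Prop :=
  ∀ i ∈ Finset.Icc 1 n, ∀ j ∈ Finset.Icc 1 n,
    ⁅h i, h j⁆ = 0 ∧
    ⁅e i, f j⁆ = (if i = j then h i else 0) ∧
    ⁅h i, e j⁆ = (cartanC n j i : ℂ) • e j ∧
    ⁅h i, f j⁆ = (-(cartanC n j i) : ℂ) • f j ∧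
    (i ≠ j → ((LieAlgebra.ad ℂ L (e i)) ^ (1 - cartanC n j i).toNat) (e j) = 0 ∧
      ((LieAlgebra.ad ℂ L (f i)) ^ (1 - cartanC n j i).toNat) (f j) = 0)

/-- `L` is generated as a Lie algebra by the Chevalley generators; together with
`SerreRels` this pins `L` down as a quotient of `sp_{2n}`. -/
def Generates (n : ℕ) (h e f : ℕ → L) : Prop :=
  LieSubalgebra.lieSpan ℂ L {x | ∃ i, 1 ≤ i ∧ i ≤ n ∧ (x = h i ∨ x = e i ∨ x = f i)} = ⊤

/-- `F a` is a nonzero vector of `h`-weight `-α_a`, i.e. a root vector `f_{α_a} ∈ n⁻`. -/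
def RootVectors (n : ℕ) (h : ℕ → L) (F : ℕ × ℕ → L) : Prop :=
  ∀ a, ValidPair n a → F a ≠ 0 ∧
    ∀ i ∈ Finset.Icc 1 n, ⁅h i, F a⁆ = (-(rootPairing n a i) : ℂ) • F a

/-- `v` is a highest weight vector of weight `λ = Σ m_i ω_i`. -/
def IsHWVector (n : ℕ) (h e : ℕ → L) (m : ℕ → ℕ) (v : V) : Prop :=
  v ≠ 0 ∧ (∀ i ∈ Finset.Icc 1 n, ⁅e i, v⁆ = 0) ∧
    ∀ i ∈ Finset.Icc 1 n, ⁅h i, v⁆ = (m i : ℂ) • v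

/-- the PBW filtration `V(λ)_d = U(n⁻)_d v_λ` (with `n⁻` spanned by the `F a`) -/
def filt (n : ℕ) (F : ℕ × ℕ → L) (v : V) (d : ℕ) : Submodule ℂ V :=
  Submodule.span ℂ {w | ∃ xs : List (ℕ × ℕ), xs.length ≤ d ∧
    (∀ a ∈ xs, ValidPair n a) ∧ w = applyList (xs.map F) v}

/-- the step below degree `d` of the PBW filtration (so `⊥` for `d = 0`) -/
def lowFilt (n : ℕ) (F : ℕ × ℕ → L) (v : V) (d : ℕ) : Submodule ℂ V :=
  if d = 0 then ⊥ else filt n F v (d - 1)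

/-- the PBW filtration `U(n⁻)_d v` for a subalgebra `n⁻` -/
def filtSub (nminus : LieSubalgebra ℂ L) (v : V) (d : ℕ) : Submodule ℂ V :=
  Submodule.span ℂ {w | ∃ xs : List L, xs.length ≤ d ∧ (∀ x ∈ xs, x ∈ nminus) ∧
    w = applyList xs v}

/-- a fixed enumeration of the coded positive roots -/
def pairList (n : ℕ) : List (ℕ × ℕ) :=
  ((List.range (n + 1)).flatMap fun i => (List.range (2 * n + 1)).map fun c => (i, c)).filter
    fun a => decide (ValidPair n a)

/-- a canonical list realizing a multi-exponent `s` -/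
def canonList (n : ℕ) (s : ℕ × ℕ → ℕ) : List (ℕ × ℕ) :=
  (pairList n).flatMap fun a => List.replicate (s a) a

/-- the vector `f^s v` (computed in some fixed order of the factors) -/
def actMon (n : ℕ) (F : ℕ × ℕ → L) (v : V) (s : ℕ × ℕ → ℕ) : V :=
  applyList ((canonList n s).map F) v

/-- the index type of the variables of `S(n⁻) = ℂ[f_α : α > 0]` -/
abbrev RootIdx (n : ℕ) := {a : ℕ × ℕ // ValidPair n a}

/-- extend a multi-exponent on the valid pairs by zero -/
def extendExp (n : ℕ) (t : RootIdx n →₀ ℕ) : ℕ × ℕ → ℕ :=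
  fun a => if h : ValidPair n a then t ⟨a, h⟩ else 0

/-- the action of a polynomial `p ∈ S(n⁻)` on `v` (monomial by monomial, each
monomial acting by the corresponding product of root vectors) -/
noncomputable def actPoly (n : ℕ) (F : ℕ × ℕ → L) (v : V) (p : MvPolynomial (RootIdx n) ℂ) : V :=
  ∑ t ∈ p.support, MvPolynomial.coeff t p • actMon n F v (extendExp n t)

/-- `rootSub n a b = some c` when `α_a - α_b` is the positive root `α_c` -/
def rootSub (n : ℕ) (a b : ℕ × ℕ) : Option (ℕ × ℕ) :=
  (pairList n).find? fun c =>
    (List.range (n + 1)).all fun l => coeffRoot n c l + coeffRoot n b l == coeffRoot n a l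

/-- the operator `∂_{α_b}` on `S(n⁻)`: the derivation with `∂_{α_b} f_{α_a} = f_{α_a - α_b}`
if `α_a - α_b` is a positive root and `0` otherwise -/
noncomputable def pd (n : ℕ) (b : ℕ × ℕ) :
    Derivation ℂ (MvPolynomial (RootIdx n) ℂ) (MvPolynomial (RootIdx n) ℂ) :=
  MvPolynomial.mkDerivation ℂ fun a =>
    match rootSub n a.1 b with
    | some c => if h : ValidPair n c then MvPolynomial.X ⟨c, h⟩ else 0
    | none => 0

/-- the generators `f_{α_{i,j}}^{m_i+⋯+m_j+1}` (`1 ≤ i ≤ j ≤ n-1`) and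
`f_{α_{i,ī}}^{m_i+⋯+m_n+1}` (`1 ≤ i ≤ n`) of the space `R` -/
def genSet (n : ℕ) (m : ℕ → ℕ) : Set (MvPolynomial (RootIdx n) ℂ) :=
  {p | (∃ (a : RootIdx n) (i j : ℕ), 1 ≤ i ∧ i ≤ j ∧ j ≤ n - 1 ∧ a.val = (i, j) ∧
          p = MvPolynomial.X a ^ ((∑ l ∈ Finset.Icc i j, m l) + 1)) ∨
       (∃ (a : RootIdx n) (i : ℕ), 1 ≤ i ∧ i ≤ n ∧ a.val = (i, 2 * n - i) ∧
          p = MvPolynomial.X a ^ ((∑ l ∈ Finset.Icc i n, m l) + 1))}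

/-- the set `U(n⁺) ∘ R`: all results of applying words in the operators `∂_α` to
elements of `R` -/
def opGenSet (n : ℕ) (m : ℕ → ℕ) : Set (MvPolynomial (RootIdx n) ℂ) :=
  {p | ∃ (ds : List (ℕ × ℕ)) (r : MvPolynomial (RootIdx n) ℂ), r ∈ genSet n m ∧
    (∀ b ∈ ds, ValidPair n b) ∧ p = ds.foldr (fun b q => pd n b q) r}

/-- the ideal `I(λ) = S(n⁻)·(U(n⁺) ∘ R)` -/
noncomputable def idealI (n : ℕ) (m : ℕ → ℕ) : Ideal (MvPolynomial (RootIdx n) ℂ) :=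
  Ideal.span (opGenSet n m)

end Lie

end SpPBW

namespace SpPBW

/-! A Dyck step raises exactly one coordinate of `(r, q)`, so a Dyck path increases strictly in
the order (2.8). For `s ∈ S(ω_i)` the Dyck path inequality bounds the sum of `s` along the path by
`1`, and every root of the path in the support of `s` contributes at least `1` to that sum. -/

theorem rootLt_trans {a b c : ℕ × ℕ} (hab : rootLt a b) (hbc : rootLt b c) : rootLt a c := by
  unfold rootLt at *
  omega

instance : IsTrans (ℕ × ℕ) rootLt := ⟨fun _ _ _ => rootLt_trans⟩

theorem DyckStep.rootLt {a b : ℕ × ℕ} (h : DyckStep a b) : rootLt a b := by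
  rcases h with rfl | rfl <;> simp [SpPBW.rootLt]

theorem IsDyck.pairwise_rootLt {n : ℕ} {p : List (ℕ × ℕ)} (hp : IsDyck n p) :
    p.Pairwise rootLt :=
  List.isChain_iff_pairwise.mp (hp.2.2.2.1.imp fun _ _ => DyckStep.rootLt)

theorem _root_.List.length_filter_ne_zero_le_sum_map {α : Type*} (f : α → ℕ) (l : List α) :
    (l.filter fun a => decide (f a ≠ 0)).length ≤ (l.map f).sum := by
  induction l with
  | nil => simp
  | cons a t ih =>
    by_cases h : f a = 0
    · simpa [List.filter_cons, h] using ih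
    · simp only [List.filter_cons, h, ne_eq, not_false_eq_true, decide_true, if_true,
        List.length_cons, List.map_cons, List.sum_cons] at ih ⊢
      omega

theorem sum_Icc_fundWt_le_one (i a b : ℕ) : ∑ l ∈ Finset.Icc a b, fundWt i l ≤ 1 := by
  simp only [fundWt, Finset.sum_ite_eq']
  split <;> simp

theorem pathBound_fundWt_le_one (n i : ℕ) (p : List (ℕ × ℕ)) : pathBound n (fundWt i) p ≤ 1 := by
  unfold pathBound
  split
  · split <;> exact sum_Icc_fundWt_le_one _ _ _
  · exact zero_le_one

theorem InS.length_filter_support_le_one {n i : ℕ} {s : ℕ × ℕ → ℕ} (hs : InS n (fundWt i) s)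
    {p : List (ℕ × ℕ)} (hp : IsDyck n p) : (p.filter fun a => decide (s a ≠ 0)).length ≤ 1 :=
  calc (p.filter fun a => decide (s a ≠ 0)).length
      ≤ (p.map s).sum := p.length_filter_ne_zero_le_sum_map s
    _ ≤ pathBound n (fundWt i) p := hs.2 p hp
    _ ≤ 1 := pathBound_fundWt_le_one n i p

/-- The roots along a symplectic Dyck path are strictly increasing with respect to
the order (2.8); consequently a Dyck path contains at most one element of the
support of any `s ∈ S(ω_i)` (the sets `M^s` of Lemma 3.1). -/
theorem stmt5 (n : ℕ) (p : List (ℕ × ℕ)) (hp : IsDyck n p) :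
    p.Pairwise rootLt ∧
    ∀ i s, InS n (fundWt i) s → (p.filter fun a => decide (s a ≠ 0)).length ≤ 1 :=
  ⟨hp.pairwise_rootLt, fun _ _ hs => hs.length_filter_support_le_one hp⟩

end SpPBW
end

section
/- For every fundamental weight ω_i of sp_{2n}, the number of integer points of the polytope P(ω_i) equals the dimension of the irreducible sp_{2n}-module V(ω_i), namely #S(ω_i) = C(2n,i) − C(2n,i−2). -/
open scoped BigOperators TensorProduct

namespace SpPBW

/-!
For `λ = ω_i` the path inequalities say exactly that `s` is the indicator function of an
antichain, for the componentwise order, in the staircase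
`{(a, c) | 1 ≤ a ≤ i, i ≤ c, a + c ≤ 2n}`: a Dyck path through two comparable points of the
staircase has bound `1`, and conversely every Dyck path is a chain, so it meets an antichain at
most once. The antichains of a staircase with `r + 1` rows are those avoiding the last row, plus,
after removing the corner `(r + 1, L)`, the antichains of the staircase without its first
column `L`. This Pascal recursion solves to `C(2n, i) - C(2n, i - 2)`.
-/

def stair (r L B : ℕ) : Finset (ℕ × ℕ) :=
  (Finset.Icc 1 r ×ˢ Finset.Icc L B).filter fun x => x.1 + x.2 ≤ B

lemma mem_stair {r L B : ℕ} {x : ℕ × ℕ} :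
    x ∈ stair r L B ↔ 1 ≤ x.1 ∧ x.1 ≤ r ∧ L ≤ x.2 ∧ x.1 + x.2 ≤ B := by
  simp only [stair, Finset.mem_filter, Finset.mem_product, Finset.mem_Icc]
  omega

open Classical in
noncomputable def stairAntichains (r L B : ℕ) : Finset (Finset (ℕ × ℕ)) :=
  (stair r L B).powerset.filter fun A => IsAntichain (· ≤ ·) (A : Set (ℕ × ℕ))

section StairAntichains

variable {r L B : ℕ} {A : Finset (ℕ × ℕ)}

lemma mem_stairAntichains :
    A ∈ stairAntichains r L B ↔
      A ⊆ stair r L B ∧ IsAntichain (· ≤ ·) (A : Set (ℕ × ℕ)) := by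
  simp [stairAntichains]

lemma stairAntichains_zero : stairAntichains 0 L B = {∅} := by
  ext A
  simp only [mem_stairAntichains, Finset.mem_singleton]
  constructor
  · rintro ⟨hA, -⟩
    exact Finset.eq_empty_of_forall_notMem fun x hx => by have := mem_stair.mp (hA hx); omega
  · rintro rfl
    simp

lemma stair_succ_of_lt (h : B < r + 1 + L) : stair (r + 1) L B = stair r L B := by
  ext x
  simp only [mem_stair]
  omega

lemma stair_subset_stair_succ : stair r L B ⊆ stair (r + 1) L B :=
  fun x hx => by simp only [mem_stair] at hx ⊢; omega

lemma stair_succ_subset_stair : stair r (L + 1) B ⊆ stair r L B :=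
  fun x hx => by simp only [mem_stair] at hx ⊢; omega

lemma le_snd_of_mem_erase_corner (hA : A ∈ stairAntichains (r + 1) L B) {c : ℕ}
    (hc : (r + 1, c) ∈ A) {x : ℕ × ℕ} (hx : x ∈ A.erase (r + 1, L)) : L + 1 ≤ x.2 := by
  obtain ⟨hsub, hanti⟩ := mem_stairAntichains.mp hA
  obtain ⟨hne, hxA⟩ := Finset.mem_erase.mp hx
  have := mem_stair.mp (hsub hxA)
  have := mem_stair.mp (hsub hc)
  by_contra hlt
  have hle : x ≤ (r + 1, c) := Prod.mk_le_mk.mpr ⟨by omega, by omega⟩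
  obtain rfl : x = (r + 1, c) := by_contra fun h => hanti hxA hc h hle
  exact hne (Prod.ext rfl (by dsimp only at hlt ⊢; omega))

lemma stairAntichains_mono_left (hA : A ∈ stairAntichains r (L + 1) B) :
    A ∈ stairAntichains r L B :=
  mem_stairAntichains.mpr ⟨(mem_stairAntichains.mp hA).1.trans stair_succ_subset_stair,
    (mem_stairAntichains.mp hA).2⟩

lemma stairAntichains_succ_of_lt (h : B < r + 1 + L) :
    stairAntichains (r + 1) L B = stairAntichains r L B := by
  simp only [stairAntichains, stair_succ_of_lt h]

lemma filter_not_mem_row_stairAntichains :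
    (stairAntichains (r + 1) L B).filter (fun A => ¬ ∃ x ∈ A, x.1 = r + 1) =
      stairAntichains r L B := by
  ext A
  simp only [Finset.mem_filter, mem_stairAntichains, not_exists, not_and]
  constructor
  · rintro ⟨⟨hsub, hanti⟩, hrow⟩
    refine ⟨fun x hx => ?_, hanti⟩
    have := mem_stair.mp (hsub hx)
    have := hrow x hx
    exact mem_stair.mpr (by omega)
  · rintro ⟨hsub, hanti⟩
    refine ⟨⟨hsub.trans stair_subset_stair_succ, hanti⟩, fun x hx => ?_⟩
    have := mem_stair.mp (hsub hx)
    omega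

lemma erase_corner_mem_stairAntichains (hA : A ∈ stairAntichains (r + 1) L B) {c : ℕ}
    (hc : (r + 1, c) ∈ A) : A.erase (r + 1, L) ∈ stairAntichains (r + 1) (L + 1) B := by
  obtain ⟨hsub, hanti⟩ := mem_stairAntichains.mp hA
  refine mem_stairAntichains.mpr ⟨fun x hx => ?_, hanti.subset (by simp)⟩
  have := le_snd_of_mem_erase_corner hA hc hx
  have := mem_stair.mp (hsub (Finset.mem_of_mem_erase hx))
  exact mem_stair.mpr (by omega)

lemma insert_corner_mem_stairAntichains (h : r + 1 + L ≤ B)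
    (hA : A ∈ stairAntichains (r + 1) (L + 1) B) (hrow : ∀ x ∈ A, x.1 ≠ r + 1) :
    insert (r + 1, L) A ∈ stairAntichains (r + 1) L B := by
  obtain ⟨hsub, hanti⟩ := mem_stairAntichains.mp hA
  refine mem_stairAntichains.mpr ⟨Finset.insert_subset (mem_stair.mpr (by simp only; omega))
    (hsub.trans stair_succ_subset_stair), ?_⟩
  rw [Finset.coe_insert]
  refine hanti.insert (fun y hy _ hle => ?_) (fun y hy _ hle => ?_)
  · have := mem_stair.mp (hsub hy)
    exact absurd (Prod.mk_le_mk.mp hle).2 (by omega)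
  · have := mem_stair.mp (hsub hy)
    have := hrow y hy
    exact absurd (Prod.mk_le_mk.mp hle).1 (by omega)

lemma card_filter_mem_row_stairAntichains (h : r + 1 + L ≤ B) :
    ((stairAntichains (r + 1) L B).filter (fun A => ∃ x ∈ A, x.1 = r + 1)).card =
      (stairAntichains (r + 1) (L + 1) B).card := by
  refine Finset.card_nbij' (fun A => A.erase (r + 1, L))
    (fun A => if ∃ x ∈ A, x.1 = r + 1 then A else insert (r + 1, L) A) ?_ ?_ ?_ ?_
  · intro A hA
    simp only [Finset.coe_filter, Set.mem_ofPred_eq] at hA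
    obtain ⟨hA, ⟨a, c⟩, hc, rfl : a = r + 1⟩ := hA
    exact erase_corner_mem_stairAntichains hA hc
  · intro A hA
    simp only [Finset.coe_filter, Set.mem_ofPred_eq]
    split_ifs with hrow
    · exact ⟨stairAntichains_mono_left hA, hrow⟩
    · push Not at hrow
      exact ⟨insert_corner_mem_stairAntichains h hA hrow, _, Finset.mem_insert_self _ _, rfl⟩
  · intro A hA
    simp only [Finset.coe_filter, Set.mem_ofPred_eq] at hA
    obtain ⟨hA, ⟨a, c⟩, hc, rfl : a = r + 1⟩ := hA
    dsimp only
    by_cases hL : (r + 1, L) ∈ A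
    · rw [if_neg, Finset.insert_erase hL]
      rintro ⟨y, hy, hy1⟩
      have := le_snd_of_mem_erase_corner hA hc hy
      obtain ⟨hne, hyA⟩ := Finset.mem_erase.mp hy
      exact (mem_stairAntichains.mp hA).2 hL hyA (Ne.symm hne)
        (Prod.le_def.mpr ⟨hy1.ge, by omega⟩)
    · rw [Finset.erase_eq_of_notMem hL, if_pos ⟨_, hc, rfl⟩]
  · intro A hA
    have hL : (r + 1, L) ∉ A := fun hL => by
      have := mem_stair.mp ((mem_stairAntichains.mp hA).1 hL)
      omega
    dsimp only
    split_ifs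
    · exact Finset.erase_eq_of_notMem hL
    · exact Finset.erase_insert hL

lemma card_stairAntichains_succ (h : r + 1 + L ≤ B) :
    (stairAntichains (r + 1) L B).card =
      (stairAntichains r L B).card + (stairAntichains (r + 1) (L + 1) B).card := by
  rw [← Finset.card_filter_add_card_filter_not (fun A => ∃ x ∈ A, x.1 = r + 1),
    filter_not_mem_row_stairAntichains, card_filter_mem_row_stairAntichains h, add_comm]

end StairAntichains

lemma ite_choose_sub_two_succ (r N : ℕ) :
    (if 2 ≤ r + 1 then (N + 1).choose (r + 1 - 2) else 0) =
      (if 2 ≤ r then N.choose (r - 2) else 0) +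
        (if 2 ≤ r + 1 then N.choose (r + 1 - 2) else 0) := by
  rcases r with _ | _ | r
  · simp
  · simp
  · simp only [le_add_iff_nonneg_left, zero_le, if_true]
    exact Nat.choose_succ_succ' N r

theorem card_stairAntichains_add (r d L : ℕ) (hr : r ≤ d + 1) :
    (stairAntichains r L (L + d)).card + (if 2 ≤ r then (d + r).choose (r - 2) else 0) =
      (d + r).choose r := by
  induction d generalizing r L with
  | zero =>
    interval_cases r
    · simp [stairAntichains_zero]
    · rw [stairAntichains_succ_of_lt (by omega), stairAntichains_zero]; simp
  | succ d ihd =>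
    induction r with
    | zero => simp [stairAntichains_zero]
    | succ r ihr =>
      have hT := ite_choose_sub_two_succ r (d + 1 + r)
      have hC := Nat.choose_succ_succ' (d + 1 + r) r
      rw [show d + 1 + (r + 1) = d + 1 + r + 1 by omega]
      rcases Nat.lt_or_ge r (d + 1) with hrd | hrd
      · rw [card_stairAntichains_succ (by omega)]
        have h1 := ihr (by omega)
        have h2 := ihd (r + 1) (L + 1) (by omega)
        rw [show L + 1 + d = L + (d + 1) by omega, show d + (r + 1) = d + 1 + r by omega] at h2
        omega
      · -- the staircase has no room for row `d + 2`; symmetry of binomials closes the count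
        obtain rfl : r = d + 1 := by omega
        rw [stairAntichains_succ_of_lt (by omega)]
        have h1 := ihr (by omega)
        have hsymm : (d + 1 + (d + 1)).choose (d + 1 + 1) =
            (d + 1 + (d + 1)).choose (d + 1 + 1 - 2) :=
          Nat.choose_symm_of_eq_add (by omega)
        simp only [show 2 ≤ d + 1 + 1 by omega, if_true] at hT ⊢
        omega

section DyckPaths

variable {n : ℕ} {p : List (ℕ × ℕ)}

lemma DyckStep.lt {a b : ℕ × ℕ} (h : DyckStep a b) : a < b := by
  rcases h with rfl | rfl <;> simp [Prod.lt_iff]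

lemma IsDyck.pairwise_lt (hp : IsDyck n p) : p.Pairwise (· < ·) :=
  List.isChain_iff_pairwise.mp (List.IsChain.imp (fun _ _ => DyckStep.lt) hp.2.2.2.1)

lemma IsDyck.nodup (hp : IsDyck n p) : p.Nodup :=
  hp.pairwise_lt.imp ne_of_lt

lemma IsDyck.isChain (hp : IsDyck n p) : IsChain (· ≤ ·) {x | x ∈ p} := by
  intro a ha b hb _
  have hle := hp.pairwise_lt.imp le_of_lt
  exact List.Pairwise.forall_of_forall_of_flip (R := fun a b => a ≤ b ∨ b ≤ a)
    (fun _ _ => Or.inl le_rfl) (hle.imp Or.inl) (hle.imp Or.inr) ha hb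

lemma IsDyck.head_le (hp : IsDyck n p) {a x : ℕ × ℕ} (ha : p.head? = some a) (hx : x ∈ p) :
    a ≤ x := by
  rw [List.head?_eq_some_head (List.ne_nil_of_mem hx), Option.some_inj] at ha
  exact ha ▸ (hp.pairwise_lt.imp le_of_lt).rel_head hx

lemma IsDyck.le_getLast (hp : IsDyck n p) {b x : ℕ × ℕ} (hb : p.getLast? = some b)
    (hx : x ∈ p) : x ≤ b := by
  rw [List.getLast?_eq_some_getLast (List.ne_nil_of_mem hx), Option.some_inj] at hb
  exact hb ▸ (hp.pairwise_lt.imp le_of_lt).rel_getLast hx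

end DyckPaths

lemma sum_Icc_fundWt (i a b : ℕ) :
    ∑ l ∈ Finset.Icc a b, fundWt i l = if a ≤ i ∧ i ≤ b then 1 else 0 := by
  simp [fundWt, Finset.sum_ite_eq']

section PathThrough

variable {n : ℕ} {x y : ℕ × ℕ}

/-- The point with `row + column = m` on the Dyck path that runs along row `x.1` up to column
`y.2`, then down that column, and finally either further down to the diagonal (if `y.2 ≤ n`) or
along row `y.1` to the antidiagonal `row + column = 2n`. -/
def throughPt (n : ℕ) (x y : ℕ × ℕ) (m : ℕ) : ℕ × ℕ :=
  if m ≤ x.1 + y.2 then (x.1, m - x.1)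
  else if y.2 ≤ n ∨ m ≤ y.1 + y.2 then (m - y.2, y.2)
  else (y.1, m - y.1)

def pathThrough (n : ℕ) (x y : ℕ × ℕ) : List (ℕ × ℕ) :=
  (List.range ((if y.2 ≤ n then 2 * y.2 else 2 * n) - 2 * x.1 + 1)).map
    fun j => throughPt n x y (2 * x.1 + j)

lemma head?_pathThrough (hx : x.1 ≤ y.2) : (pathThrough n x y).head? = some (x.1, x.1) := by
  simp only [pathThrough, List.range_succ_eq_map, List.map_cons, List.head?_cons, throughPt]
  rw [if_pos (by omega), Nat.add_zero, Nat.two_mul, Nat.add_sub_cancel]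

lemma getLast?_pathThrough (hx : ValidPair n x) (hy : ValidPair n y) (hxy : x ≤ y) :
    (pathThrough n x y).getLast? = some (if y.2 ≤ n then (y.2, y.2) else (y.1, 2 * n - y.1)) := by
  obtain ⟨-, hx2, hx3⟩ := hx
  obtain ⟨-, -, hy3⟩ := hy
  have := Prod.le_def.mp hxy
  simp only [pathThrough, List.range_succ, List.map_append, List.map_singleton,
    List.getLast?_concat, throughPt]
  split_ifs <;> simp only [Prod.mk.injEq, Option.some.injEq, and_true, true_and] <;> omega

lemma isDyck_pathThrough (hx : ValidPair n x) (hy : ValidPair n y) (hxy : x ≤ y) :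
    IsDyck n (pathThrough n x y) := by
  have hlast := getLast?_pathThrough hx hy hxy
  obtain ⟨hx1, hx2, hx3⟩ := hx
  obtain ⟨hy1, hy2, hy3⟩ := hy
  have := Prod.le_def.mp hxy
  refine ⟨by simp [pathThrough], ?_, ⟨x.1, head?_pathThrough (by omega)⟩, ?_,
    ⟨if y.2 ≤ n then y.2 else y.1, ?_⟩⟩
  · simp only [pathThrough, List.mem_map, List.mem_range, forall_exists_index, and_imp]
    rintro _ m hm rfl
    unfold throughPt ValidPair
    split_ifs at hm ⊢ <;> simp only <;> omega
  · show List.IsChain _ _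
    rw [pathThrough, List.isChain_map, List.isChain_range_succ]
    intro m hm
    unfold throughPt DyckStep
    split_ifs at hm ⊢ <;> simp only [Prod.mk.injEq, and_true, true_and] <;> omega
  · rw [hlast]
    split_ifs <;> simp

lemma mem_pathThrough (hx : ValidPair n x) (hy : ValidPair n y) (hxy : x ≤ y) {z : ℕ × ℕ}
    (hz : z = x ∨ z = y) : z ∈ pathThrough n x y := by
  obtain ⟨-, hx2, hx3⟩ := hx
  obtain ⟨-, hy2, hy3⟩ := hy
  have := Prod.le_def.mp hxy
  refine List.mem_map.mpr ⟨z.1 + z.2 - 2 * x.1, List.mem_range.mpr ?_, ?_⟩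
  · rcases hz with rfl | rfl <;> split_ifs <;> omega
  · unfold throughPt
    rcases hz with rfl | rfl <;> split_ifs <;>
      simp only [Prod.ext_iff, and_true, true_and] <;> omega

lemma pathBound_pathThrough (hx : ValidPair n x) (hy : ValidPair n y) (hxy : x ≤ y) {i : ℕ}
    (hin : i ≤ n) :
    pathBound n (fundWt i) (pathThrough n x y) = if x.1 ≤ i ∧ i ≤ y.2 then 1 else 0 := by
  have := hy.2.2
  unfold pathBound
  rw [head?_pathThrough (hx.2.1.trans (Prod.le_def.mp hxy).2), getLast?_pathThrough hx hy hxy]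
  split_ifs <;> simp only [sum_Icc_fundWt] <;> split_ifs <;> omega

end PathThrough

section FundamentalWeight

variable {n i : ℕ}

lemma IsDyck.pathBound_fundWt_eq_one (hin : i ≤ n) {p : List (ℕ × ℕ)} (hp : IsDyck n p)
    {x : ℕ × ℕ} (hx : x ∈ p) (h1 : x.1 ≤ i) (h2 : i ≤ x.2) :
    pathBound n (fundWt i) p = 1 := by
  obtain ⟨-, -, ⟨c, hhead⟩, -, j, hlast⟩ := id hp
  have hc := Prod.le_def.mp (hp.head_le hhead hx)
  unfold pathBound
  rw [hhead]
  rcases hlast with hl | hl <;> have hj := Prod.le_def.mp (hp.le_getLast hl hx) <;> rw [hl] <;>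
    dsimp only at hc hj ⊢ <;> split_ifs <;> rw [sum_Icc_fundWt, if_pos (by omega)]

lemma inS_fundWt_indicator (hin : i ≤ n) {A : Finset (ℕ × ℕ)}
    (hA : A ∈ stairAntichains i i (2 * n)) :
    InS n (fundWt i) fun x => if x ∈ A then 1 else 0 := by
  obtain ⟨hsub, hanti⟩ := mem_stairAntichains.mp hA
  refine ⟨fun x hx => if_neg fun hxA => hx ?_, fun p hp => ?_⟩
  · have := mem_stair.mp (hsub hxA)
    exact ⟨by omega, by omega, by omega⟩
  rw [← List.sum_toFinset _ hp.nodup, Finset.sum_boole, Nat.cast_id]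
  have hmeet : (p.toFinset.filter (· ∈ A)).card ≤ 1 := by
    refine Finset.card_le_one.mpr fun a ha b hb => ?_
    simp only [Finset.mem_filter, List.mem_toFinset] at ha hb
    exact inter_subsingleton_of_isChain_of_isAntichain hp.isChain hanti ha hb
  obtain h0 | ⟨x, hx⟩ := (p.toFinset.filter (· ∈ A)).eq_empty_or_nonempty
  · simp [h0]
  · simp only [Finset.mem_filter, List.mem_toFinset] at hx
    have := mem_stair.mp (hsub hx.2)
    rw [hp.pathBound_fundWt_eq_one hin hx.1 (by omega) (by omega)]
    exact hmeet

variable {s : ℕ × ℕ → ℕ}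

lemma InS.validPair_of_ne_zero {m : ℕ → ℕ} (hs : InS n m s) {x : ℕ × ℕ}
    (hx : s x ≠ 0) : ValidPair n x :=
  by_contra fun h => hx (hs.1 x h)

lemma InS.sum_pair_le (hs : InS n (fundWt i) s) (hin : i ≤ n) {x y : ℕ × ℕ}
    (hx : ValidPair n x) (hy : ValidPair n y) (hxy : x ≤ y) :
    ∑ z ∈ {x, y}, s z ≤ if x.1 ≤ i ∧ i ≤ y.2 then 1 else 0 := by
  have hp := isDyck_pathThrough hx hy hxy
  calc ∑ z ∈ {x, y}, s z ≤ ∑ z ∈ (pathThrough n x y).toFinset, s z := by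
        refine Finset.sum_le_sum_of_subset fun z hz => List.mem_toFinset.mpr ?_
        exact mem_pathThrough hx hy hxy (by simpa using hz)
    _ = ((pathThrough n x y).map s).sum := List.sum_toFinset s hp.nodup
    _ ≤ pathBound n (fundWt i) (pathThrough n x y) := hs.2 _ hp
    _ = _ := pathBound_pathThrough hx hy hxy hin

lemma InS.mem_stair_of_ne_zero (hs : InS n (fundWt i) s) (hin : i ≤ n) {x : ℕ × ℕ}
    (hx : s x ≠ 0) : x ∈ stair i i (2 * n) ∧ s x = 1 := by
  have hv := hs.validPair_of_ne_zero hx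
  have h := hs.sum_pair_le hin hv hv le_rfl
  rw [Finset.pair_eq_singleton, Finset.sum_singleton] at h
  obtain ⟨h1, -, h3⟩ := hv
  split_ifs at h with hi
  · exact ⟨mem_stair.mpr ⟨h1, hi.1, hi.2, by omega⟩, by omega⟩
  · omega

lemma InS.eq_of_le (hs : InS n (fundWt i) s) (hin : i ≤ n) {x y : ℕ × ℕ} (hx : s x ≠ 0)
    (hy : s y ≠ 0) (hxy : x ≤ y) : x = y := by
  by_contra hne
  have h := hs.sum_pair_le hin (hs.validPair_of_ne_zero hx) (hs.validPair_of_ne_zero hy) hxy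
  rw [Finset.sum_pair hne] at h
  split_ifs at h <;> omega

lemma InS.exists_eq_indicator (hs : InS n (fundWt i) s) (hin : i ≤ n) :
    ∃ A ∈ stairAntichains i i (2 * n), s = fun x => if x ∈ A then 1 else 0 := by
  refine ⟨(stair i i (2 * n)).filter (s · ≠ 0),
    mem_stairAntichains.mpr ⟨Finset.filter_subset _ _, fun x hx y hy hne hle => ?_⟩, ?_⟩
  · simp only [Finset.coe_filter, Set.mem_ofPred_eq] at hx hy
    exact hne (hs.eq_of_le hin hx.2 hy.2 hle)
  · funext x
    by_cases hx : s x = 0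
    · simp [hx]
    · simp [hs.mem_stair_of_ne_zero hin hx]

lemma setOf_inS_fundWt (hin : i ≤ n) :
    {s | InS n (fundWt i) s} =
      (fun A x => if x ∈ A then 1 else 0) ''
        (stairAntichains i i (2 * n) : Set (Finset (ℕ × ℕ))) := by
  ext s
  constructor
  · intro hs
    obtain ⟨A, hA, rfl⟩ := InS.exists_eq_indicator hs hin
    exact ⟨A, hA, rfl⟩
  · rintro ⟨A, hA, rfl⟩
    exact inS_fundWt_indicator hin hA

end FundamentalWeight

lemma indicator_finset_injective :
    Function.Injective fun (A : Finset (ℕ × ℕ)) (x : ℕ × ℕ) =>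
      if x ∈ A then 1 else 0 := by
  intro A B h
  ext x
  have := congrFun h x
  dsimp only at this
  split_ifs at this <;> simp_all

theorem stmt8_general (n i : ℕ) (hin : i ≤ n) :
    {s : ℕ × ℕ → ℕ | InS n (fundWt i) s}.ncard =
      Nat.choose (2 * n) i - (if 2 ≤ i then Nat.choose (2 * n) (i - 2) else 0) := by
  have hcount := card_stairAntichains_add i (2 * n - i) i (by omega)
  rw [show i + (2 * n - i) = 2 * n by omega, show 2 * n - i + i = 2 * n by omega] at hcount
  rw [setOf_inS_fundWt hin, Set.ncard_image_of_injective _ indicator_finset_injective,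
    Set.ncard_coe_finset]
  omega

/-- `#S(ω_i) = dim V(ω_i) = C(2n, i) - C(2n, i-2)`. -/
theorem stmt8 (n i : ℕ) (hn : 1 ≤ n) (hi : 1 ≤ i) (hin : i ≤ n) :
    {s : ℕ × ℕ → ℕ | InS n (fundWt i) s}.ncard =
      Nat.choose (2 * n) i - (if 2 ≤ i then Nat.choose (2 * n) (i - 2) else 0) :=
  stmt8_general n i hin

end SpPBW
end
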